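/- arXiv:1005.1327 — 2 statements merged into one kernel-verified Lean document; each statement's English description precedes it below -/
import Mathlib

section
/- Let μ be a probability measure on a measurable space Ω, S ⊆ Ω measurable with μ(S) = p, and A ⊆ Ω measurable with μ(S \ A) ≤ α'·μ(S) and μ(A \ S) ≤ β'·μ(Ω \ S). Let 0 ≤ p₁ < p₀ ≤ 1. Then: (a) if p ≥ p₀ then μ(A) ≥ (1 − α')·p₀; and (b) if p ≤ p₁ then μ(A) ≤ p₁ + β'·(1 − p₁). Consequently, whenever (1 − α')·p₀ > p₁ + β'·(1 − p₁), the hypotheses p ≥ p₀ and p ≤ p₁ about the true satisfaction probability are separated by the transformed thresholds (1 − α')·p₀ and p₁ + β'·(1 − p₁) for the observed acceptance probability μ(A). -/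
open MeasureTheory
open scoped ENNReal

/-- Nested test with indifference region `(p₁, p₀)`: if the true satisfaction
probability `p = μ S` is at least `p₀` then the observed acceptance probability is at
least `(1 - α') * p₀`, and if `p ≤ p₁` then it is at most `p₁ + β' * (1 - p₁)`. -/
theorem nested_thresholds_transformed {Ω : Type*} [MeasurableSpace Ω]
    (μ : Measure Ω) [IsProbabilityMeasure μ]
    (S A : Set Ω) (hS : MeasurableSet S) (hA : MeasurableSet A)
    (α' β' : ℝ≥0∞)
    (hTypeI : μ (S \ A) ≤ α' * μ S)
    (hTypeII : μ (A \ S) ≤ β' * μ Sᶜ)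
    (p₁ p₀ : ℝ≥0∞) (h₁₀ : p₁ < p₀) (h₀ : p₀ ≤ 1) :
    (p₀ ≤ μ S → (1 - α') * p₀ ≤ μ A) ∧
    (μ S ≤ p₁ → μ A ≤ p₁ + β' * (1 - p₁)) := by
  have hS1 : μ S ≤ 1 := prob_le_one
  have hp₁1 : p₁ ≤ 1 := le_trans h₁₀.le h₀
  constructor
  · intro hp
    rcases le_or_gt α' 1 with hα | hα
    · have key : (1 - α') * μ S + α' * μ S = μ S := by
        rw [← add_mul, tsub_add_cancel_of_le hα, one_mul]
      have hle : α' * μ S ≤ μ S := by simpa using mul_le_mul_left hα (μ S)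
      have hfin : α' * μ S ≠ ∞ :=
        (lt_of_le_of_lt (le_trans hle hS1) ENNReal.one_lt_top).ne
      have h1 : (1 - α') * μ S ≤ μ S - α' * μ S :=
        ENNReal.le_sub_of_add_le_right hfin key.le
      have h2 : μ S - α' * μ S ≤ μ S - μ (S \ A) :=
        tsub_le_tsub_left hTypeI _
      have h3 : μ S - μ (S \ A) ≤ μ (S ∩ A) := by
        rw [tsub_le_iff_right, measure_inter_add_diff S hA]
      calc (1 - α') * p₀ ≤ (1 - α') * μ S := mul_le_mul_right hp _
        _ ≤ μ (S ∩ A) := le_trans h1 (le_trans h2 h3)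
        _ ≤ μ A := measure_mono Set.inter_subset_right
    · have : (1 : ℝ≥0∞) - α' = 0 := tsub_eq_zero_of_le hα.le
      simp [this]
  · intro hp
    have hAsplit : μ A = μ (A ∩ S) + μ (A \ S) :=
      (measure_inter_add_diff A hS).symm
    have hcompl : μ Sᶜ = 1 - μ S := by
      rw [measure_compl hS (measure_ne_top μ S), measure_univ]
    rcases le_or_gt β' 1 with hβ | hβ
    · have hdecomp : (1 : ℝ≥0∞) - μ S = (1 - p₁) + (p₁ - μ S) :=
        (tsub_add_tsub_cancel hp₁1 hp).symm
      calc μ A = μ (A ∩ S) + μ (A \ S) := hAsplit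
        _ ≤ μ S + β' * μ Sᶜ := add_le_add (measure_mono Set.inter_subset_right) hTypeII
        _ = μ S + (β' * (1 - p₁) + β' * (p₁ - μ S)) := by
            rw [hcompl, hdecomp, mul_add]
        _ ≤ μ S + (β' * (1 - p₁) + (p₁ - μ S)) := by
            gcongr
            exact mul_le_of_le_one_left' hβ
        _ = (μ S + (p₁ - μ S)) + β' * (1 - p₁) := by ring
        _ = p₁ + β' * (1 - p₁) := by rw [add_tsub_cancel_of_le hp]
    · calc μ A ≤ 1 := prob_le_one
        _ = p₁ + (1 - p₁) := (add_tsub_cancel_of_le hp₁1).symm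
        _ ≤ p₁ + β' * (1 - p₁) := by
            gcongr
            exact le_mul_of_one_le_left' hβ.le
end

section
/- Let m ≥ 1, p₀, p₁ ∈ (0,1), and α, β ∈ (0,1). Set A = (1−β)/α and B = β/(1−α), and let L(ω) = p₁^{d(ω)} (1−p₁)^{m−d(ω)} / (p₀^{d(ω)} (1−p₀)^{m−d(ω)}) be the likelihood ratio on Ω_m = (Fin m → Bool). Suppose R ⊆ Ω_m is a decision region with R ⊆ {ω : L(ω) ≥ A} and Ω_m \ R ⊆ {ω : L(ω) ≤ B}. Define the actual error probabilities α' = μ_{p₀}(R) and β' =(μ_{p₁}(Ω_m \ R)). Then α' + β' ≤ α + β. -/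
open MeasureTheory
open scoped ENNReal

/-- The number of successes (`true` outcomes) among `m` Bernoulli observations. -/
def numTrue {m : ℕ} (ω : Fin m → Bool) : ℕ :=
  (Finset.univ.filter fun i => ω i = true).card

/-- The product measure of `m` i.i.d. Bernoulli(`p`) trials on `Fin m → Bool`. -/
noncomputable def bernProd (m : ℕ) (p : ℝ≥0∞) (hp : p ≤ 1) : Measure (Fin m → Bool) :=
  Measure.pi fun _ => (PMF.bernoulli p.toNNReal
    (by exact_mod_cast ENNReal.coe_toNNReal_le_self.trans hp)).toMeasure

/-! Wald's bound follows from the two threshold inequalities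
`A α' ≤ 1 - β'` and `β' ≤ B (1 - α')`, i.e. `α' (1 - β) ≤ α (1 - β')` and
`β' (1 - α) ≤ β (1 - α')`: adding them, the cross terms `α'β + αβ'` cancel.
The threshold inequalities hold for any likelihood-ratio test, since `μ₁` has density `L`
with respect to `μ₀`, so `μ₁ R ≥ A μ₀ R` and `μ₁ Rᶜ ≤ B μ₀ Rᶜ`. -/

theorem ENNReal.add_le_add_of_mul_one_sub_le {a b a' b' : ℝ≥0∞}
    (ha : a ≤ 1) (hb : b ≤ 1) (ha' : a' ≤ 1) (hb' : b' ≤ 1)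
    (h₁ : a' * (1 - b) ≤ a * (1 - b')) (h₂ : b' * (1 - a) ≤ b * (1 - a')) :
    a' + b' ≤ a + b := by
  have split : ∀ {x y : ℝ≥0∞}, y ≤ 1 → x * (1 - y) + x * y = x := fun hy => by
    rw [← mul_add, tsub_add_cancel_of_le hy, mul_one]
  calc a' + b' = (a' * (1 - b) + a' * b) + (b' * (1 - a) + b' * a) := by rw [split hb, split ha]
    _ ≤ (a * (1 - b') + a' * b) + (b * (1 - a') + b' * a) := by gcongr
    _ = (a * (1 - b') + a * b') + (b * (1 - a') + b * a') := by ring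
    _ = a + b := by rw [split hb', split ha']

section WithDensity

variable {Ω : Type*} [MeasurableSpace Ω] {μ : Measure Ω} {f : Ω → ℝ≥0∞} {s : Set Ω}
  {c : ℝ≥0∞}

theorem mul_le_withDensity_apply_of_le (hs : MeasurableSet s) (h : ∀ x ∈ s, c ≤ f x) :
    c * μ s ≤ μ.withDensity f s := by
  rw [withDensity_apply f hs, ← setLIntegral_const]
  exact setLIntegral_mono' hs h

theorem withDensity_apply_le_mul_of_le (hs : MeasurableSet s) (h : ∀ x ∈ s, f x ≤ c) :
    μ.withDensity f s ≤ c * μ s := by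
  rw [withDensity_apply f hs, ← setLIntegral_const]
  exact setLIntegral_mono' hs h

theorem wald_error_sum_le {μ₀ μ₁ : Measure Ω} [IsProbabilityMeasure μ₀]
    [IsProbabilityMeasure μ₁] {L : Ω → ℝ≥0∞} (hμ : μ₁ = μ₀.withDensity L)
    {α β : ℝ≥0∞} (hα₀ : α ≠ 0) (hα₁ : α < 1) (hβ : β ≤ 1)
    {R : Set Ω} (hRm : MeasurableSet R) (hR : ∀ ω ∈ R, (1 - β) / α ≤ L ω)
    (hRc : ∀ ω ∈ Rᶜ, L ω ≤ β / (1 - α)) :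
    μ₀ R + μ₁ Rᶜ ≤ α + β := by
  have hA : (1 - β) / α * μ₀ R ≤ 1 - μ₁ Rᶜ := by
    rw [prob_compl_eq_one_sub hRm, ENNReal.sub_sub_cancel ENNReal.one_ne_top prob_le_one, hμ]
    exact mul_le_withDensity_apply_of_le hRm hR
  have hB : μ₁ Rᶜ ≤ β / (1 - α) * (1 - μ₀ R) := by
    rw [← prob_compl_eq_one_sub hRm, hμ]
    exact withDensity_apply_le_mul_of_le hRm.compl hRc
  refine ENNReal.add_le_add_of_mul_one_sub_le hα₁.le hβ prob_le_one prob_le_one ?_ ?_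
  · calc μ₀ R * (1 - β) = α * ((1 - β) / α * μ₀ R) := by
          rw [← mul_assoc, ENNReal.mul_div_cancel hα₀ hα₁.ne_top, mul_comm]
      _ ≤ α * (1 - μ₁ Rᶜ) := by gcongr
  · calc μ₁ Rᶜ * (1 - α) ≤ β / (1 - α) * (1 - μ₀ R) * (1 - α) := by gcongr
      _ = β * (1 - μ₀ R) := by
          rw [mul_right_comm, ENNReal.div_mul_cancel (tsub_pos_of_lt hα₁).ne'
            (ENNReal.sub_ne_top ENNReal.one_ne_top)]

end WithDensity

section BernProd

variable {m : ℕ}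

instance (p : ℝ≥0∞) (hp : p ≤ 1) : IsProbabilityMeasure (bernProd m p hp) := by
  unfold bernProd; infer_instance

theorem card_filter_not_eq_sub_numTrue (ω : Fin m → Bool) :
    (Finset.univ.filter fun i => ¬ω i = true).card = m - numTrue ω := by
  have h := Finset.card_filter_add_card_filter_not (s := Finset.univ) (fun i => ω i = true)
  rw [Finset.card_univ, Fintype.card_fin] at h
  unfold numTrue
  omega

theorem bernProd_singleton (p : ℝ≥0∞) (hp : p ≤ 1) (ω : Fin m → Bool) :
    bernProd m p hp {ω} = p ^ numTrue ω * (1 - p) ^ (m - numTrue ω) := by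
  have hp' : p ≠ ∞ := ne_top_of_le_ne_top ENNReal.one_ne_top hp
  have hcoord : ∀ (b : Bool) (h : p.toNNReal ≤ 1),
      (PMF.bernoulli p.toNNReal h).toMeasure {b} = if b then p else 1 - p := fun b _ => by
    rw [PMF.toMeasure_apply_singleton _ _ (measurableSet_singleton b), PMF.bernoulli_apply]
    cases b <;> simp [hp', ENNReal.coe_sub]
  rw [bernProd, Measure.pi_singleton]
  simp only [hcoord]
  rw [Finset.prod_ite, Finset.prod_const, Finset.prod_const, card_filter_not_eq_sub_numTrue]
  rfl

theorem bernProd_eq_withDensity {p₀ p₁ : ℝ≥0∞} (hp₀ : 0 < p₀) (hp₀' : p₀ < 1) (hp₁ : p₁ ≤ 1) :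
    bernProd m p₁ hp₁ = (bernProd m p₀ hp₀'.le).withDensity fun ω =>
      p₁ ^ numTrue ω * (1 - p₁) ^ (m - numTrue ω) /
        (p₀ ^ numTrue ω * (1 - p₀) ^ (m - numTrue ω)) := by
  refine Measure.ext_iff_singleton.2 fun ω => ?_
  rw [withDensity_apply _ (measurableSet_singleton ω), lintegral_singleton, bernProd_singleton,
    bernProd_singleton, ENNReal.div_mul_cancel]
  · exact mul_ne_zero (pow_ne_zero _ hp₀.ne') (pow_ne_zero _ (tsub_pos_of_lt hp₀').ne')
  · exact ENNReal.mul_ne_top (ENNReal.pow_ne_top hp₀'.ne_top)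
      (ENNReal.pow_ne_top (ENNReal.sub_ne_top ENNReal.one_ne_top))

end BernProd

theorem sprt_wald_thresholds_error_sum_general (m : ℕ)
    (p₀ p₁ : ℝ≥0∞) (h₀pos : 0 < p₀) (h₀lt : p₀ < 1) (h₁lt : p₁ < 1)
    (α β : ℝ≥0∞) (hαpos : 0 < α) (hαlt : α < 1) (hβlt : β < 1)
    (A B : ℝ≥0∞) (hA : A = (1 - β) / α) (hB : B = β / (1 - α))
    (L : (Fin m → Bool) → ℝ≥0∞)
    (hL : ∀ ω, L ω = p₁ ^ numTrue ω * (1 - p₁) ^ (m - numTrue ω) /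
      (p₀ ^ numTrue ω * (1 - p₀) ^ (m - numTrue ω)))
    (R : Set (Fin m → Bool))
    (hR : R ⊆ {ω | A ≤ L ω}) (hRc : Rᶜ ⊆ {ω | L ω ≤ B})
    (α' β' : ℝ≥0∞)
    (hα' : α' = bernProd m p₀ h₀lt.le R) (hβ' : β' = bernProd m p₁ h₁lt.le Rᶜ) :
    α' + β' ≤ α + β := by
  subst hA hB hα' hβ'
  have hμ : bernProd m p₁ h₁lt.le = (bernProd m p₀ h₀lt.le).withDensity L := by
    rw [funext hL]
    exact bernProd_eq_withDensity h₀pos h₀lt h₁lt.le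
  exact wald_error_sum_le hμ hαpos.ne' hαlt hβlt.le MeasurableSet.of_discrete hR hRc

/-- Wald's bound for the SPRT with thresholds `A = (1-β)/α` and `B = β/(1-α)`: if the
region `R` of acceptance of `H₁` lies where the likelihood ratio is at least `A`, and
its complement lies where the likelihood ratio is at most `B`, then the actual error
probabilities `α' = μ_{p₀}(R)` and `β' = μ_{p₁}(Rᶜ)` satisfy `α' + β' ≤ α + β`. -/
theorem sprt_wald_thresholds_error_sum (m : ℕ) (hm : 1 ≤ m)
    (p₀ p₁ : ℝ≥0∞) (h₀pos : 0 < p₀) (h₀lt : p₀ < 1) (h₁pos : 0 < p₁) (h₁lt : p₁ < 1)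
    (α β : ℝ≥0∞) (hαpos : 0 < α) (hαlt : α < 1) (hβpos : 0 < β) (hβlt : β < 1)
    (A B : ℝ≥0∞) (hA : A = (1 - β) / α) (hB : B = β / (1 - α))
    (L : (Fin m → Bool) → ℝ≥0∞)
    (hL : ∀ ω, L ω = p₁ ^ numTrue ω * (1 - p₁) ^ (m - numTrue ω) /
      (p₀ ^ numTrue ω * (1 - p₀) ^ (m - numTrue ω)))
    (R : Set (Fin m → Bool))
    (hR : R ⊆ {ω | A ≤ L ω}) (hRc : Rᶜ ⊆ {ω | L ω ≤ B})
    (α' β' : ℝ≥0∞)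
    (hα' : α' = bernProd m p₀ h₀lt.le R) (hβ' : β' = bernProd m p₁ h₁lt.le Rᶜ) :
    α' + β' ≤ α + β :=
  sprt_wald_thresholds_error_sum_general m p₀ p₁ h₀pos h₀lt h₁lt α β hαpos hαlt hβlt A B hA hB L hL
    R hR hRc α' β' hα' hβ'
end
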